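/- Let 0 ≤ α* < 1 and L > 0. If z : (0, L] → ℝ is locally absolutely continuous on (0, L), satisfies z(x) → 0 as x → 0⁺, and ∫₀^L x^{α*} z'(x)² dx < ∞, then ∫₀^L x^{α*-2} z(x)² dx ≤ (4/(α*-1)²) ∫₀^L x^{α*} z'(x)² dx. -/

import Mathlib

/-!
Put `Z x = ∫₀ˣ |z'|`; since `z (0⁺) = 0`, `|z x| ≤ Z x`. For `α < s < 1`, Cauchy–Schwarz against
the weight `t ^ (-s)` gives `Z x ^ 2 ≤ x ^ (1 - s) / (1 - s) * ∫₀ˣ t ^ s z'²`. Inserting this into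
`∫ x ^ (α - 2) Z²` and exchanging the order of integration leaves the tail integral
`∫ₜ^∞ x ^ (α - 1 - s) dx = t ^ (α - s) / (s - α)`, so the constant is `1 / ((s - α) (1 - s))`,
which is `4 / (1 - α)²` at the optimal `s = (1 + α) / 2`. Everything is done with lower Lebesgue
integrals, so no integrability of `x ^ (α - 2) z²` is needed.
-/

open MeasureTheory Set Filter Topology
open scoped ENNReal

theorem lintegral_mul_sq_le {α : Type*} [MeasurableSpace α] {μ : Measure α} {f g : α → ℝ≥0∞}
    (hf : AEMeasurable f μ) (hg : AEMeasurable g μ) :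
    (∫⁻ a, f a * g a ∂μ) ^ 2 ≤ (∫⁻ a, f a ^ 2 ∂μ) * ∫⁻ a, g a ^ 2 ∂μ := by
  have h := ENNReal.lintegral_mul_le_Lp_mul_Lq μ Real.HolderConjugate.two_two hf hg
  simp only [ENNReal.rpow_two, one_div] at h
  have hsq (y : ℝ≥0∞) : (y ^ (2⁻¹ : ℝ)) ^ 2 = y := by
    simpa using ENNReal.rpow_inv_natCast_pow two_ne_zero y
  calc _ ≤ ((∫⁻ a, f a ^ 2 ∂μ) ^ (2⁻¹ : ℝ) * (∫⁻ a, g a ^ 2 ∂μ) ^ (2⁻¹ : ℝ)) ^ 2 := by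
        gcongr; exact h
    _ = _ := by rw [mul_pow, hsq, hsq]

theorem ENNReal.ofReal_rpow_div_two_sq {t : ℝ} (ht : 0 ≤ t) (u : ℝ) :
    ENNReal.ofReal (t ^ (u / 2)) ^ 2 = ENNReal.ofReal (t ^ u) := by
  rw [← ENNReal.ofReal_pow (Real.rpow_nonneg ht _), ← Real.rpow_natCast, ← Real.rpow_mul ht]
  norm_num

theorem setLIntegral_Ioc_zero_ofReal_rpow {r x : ℝ} (hr : -1 < r) (hx : 0 ≤ x) :
    ∫⁻ t in Ioc 0 x, ENNReal.ofReal (t ^ r) = ENNReal.ofReal (x ^ (r + 1) / (r + 1)) := by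
  rw [← ofReal_integral_eq_lintegral_ofReal, ← intervalIntegral.integral_of_le hx,
    integral_rpow (Or.inl hr), Real.zero_rpow (by linarith), sub_zero]
  · exact (intervalIntegrable_iff_integrableOn_Ioc_of_le hx).1
      (intervalIntegral.intervalIntegrable_rpow' hr)
  · filter_upwards [ae_restrict_mem measurableSet_Ioc] with t ht
      using Real.rpow_nonneg ht.1.le r

theorem setLIntegral_Ioi_ofReal_rpow {r t : ℝ} (hr : r < -1) (ht : 0 < t) :
    ∫⁻ x in Ioi t, ENNReal.ofReal (x ^ r) = ENNReal.ofReal (-t ^ (r + 1) / (r + 1)) := by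
  rw [← ofReal_integral_eq_lintegral_ofReal (integrableOn_Ioi_rpow_of_lt hr ht),
    integral_Ioi_rpow_of_lt hr ht]
  filter_upwards [ae_restrict_mem measurableSet_Ioi] with x hx
    using Real.rpow_nonneg (ht.trans hx).le r

theorem ofReal_rpow_mul_setLIntegral_Ico_le {α s t b : ℝ} (hαs : α < s) (ht : 0 < t) :
    ENNReal.ofReal (t ^ s) * ∫⁻ x in Ico t b, ENNReal.ofReal (x ^ (α - 1 - s)) ≤
      ENNReal.ofReal (t ^ α / (s - α)) := by
  calc ENNReal.ofReal (t ^ s) * ∫⁻ x in Ico t b, ENNReal.ofReal (x ^ (α - 1 - s))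
      ≤ ENNReal.ofReal (t ^ s) * ∫⁻ x in Ioi t, ENNReal.ofReal (x ^ (α - 1 - s)) :=
        mul_le_mul_right ((lintegral_mono_set Ico_subset_Ici_self).trans_eq
          (setLIntegral_congr Ioi_ae_eq_Ici.symm)) _
    _ = _ := by
      rw [setLIntegral_Ioi_ofReal_rpow (by linarith) ht,
        ← ENNReal.ofReal_mul (Real.rpow_nonneg ht.le _), mul_div_assoc', mul_neg,
        ← Real.rpow_add ht, neg_div, ← div_neg]
      ring_nf

theorem sq_setLIntegral_Ioc_zero_le {φ : ℝ → ℝ≥0∞} {s x : ℝ} (hs : s < 1) (hx : 0 ≤ x)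
    (hφ : AEMeasurable φ (volume.restrict (Ioc 0 x))) :
    (∫⁻ t in Ioc 0 x, φ t) ^ 2 ≤
      ENNReal.ofReal (x ^ (1 - s) / (1 - s)) *
        ∫⁻ t in Ioc 0 x, ENNReal.ofReal (t ^ s) * φ t ^ 2 := by
  have hsplit : ∀ᵐ t ∂volume.restrict (Ioc 0 x),
      φ t = ENNReal.ofReal (t ^ (-s / 2)) * (ENNReal.ofReal (t ^ (s / 2)) * φ t) := by
    filter_upwards [ae_restrict_mem measurableSet_Ioc] with t ht
    rw [← mul_assoc, ← ENNReal.ofReal_mul (Real.rpow_nonneg ht.1.le _), ← Real.rpow_add ht.1,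
      neg_div, neg_add_cancel, Real.rpow_zero, ENNReal.ofReal_one, one_mul]
  calc (∫⁻ t in Ioc 0 x, φ t) ^ 2
      = (∫⁻ t in Ioc 0 x,
          ENNReal.ofReal (t ^ (-s / 2)) * (ENNReal.ofReal (t ^ (s / 2)) * φ t)) ^ 2 := by
        rw [lintegral_congr_ae hsplit]
    _ ≤ (∫⁻ t in Ioc 0 x, ENNReal.ofReal (t ^ (-s / 2)) ^ 2) *
          ∫⁻ t in Ioc 0 x, (ENNReal.ofReal (t ^ (s / 2)) * φ t) ^ 2 :=
        lintegral_mul_sq_le (by fun_prop) (by fun_prop)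
    _ = _ := by
      congr 1
      · rw [setLIntegral_congr_fun measurableSet_Ioc
          fun t ht ↦ ENNReal.ofReal_rpow_div_two_sq ht.1.le (-s),
          setLIntegral_Ioc_zero_ofReal_rpow (by linarith) hx]
        ring_nf
      · refine setLIntegral_congr_fun measurableSet_Ioc fun t ht ↦ ?_
        rw [mul_pow, ENNReal.ofReal_rpow_div_two_sq ht.1.le]

theorem lintegral_mul_setLIntegral_Ioc_comm {k g : ℝ → ℝ≥0∞} {a b : ℝ}
    (hk : AEMeasurable k (volume.restrict (Ioo a b)))
    (hg : AEMeasurable g (volume.restrict (Ioo a b))) :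
    ∫⁻ x in Ioo a b, k x * ∫⁻ t in Ioc a x, g t =
      ∫⁻ t in Ioo a b, g t * ∫⁻ x in Ico t b, k x := by
  set ν := volume.restrict (Ioo a b)
  set K : ℝ × ℝ → ℝ≥0∞ := {p | p.2 ≤ p.1}.indicator fun p ↦ k p.1 * g p.2
  have hK : AEMeasurable K (ν.prod ν) :=
    (hk.comp_fst.mul hg.comp_snd).indicator (measurableSet_le measurable_snd measurable_fst)
  have hx : ∀ x ∈ Ioo a b, k x * ∫⁻ t in Ioc a x, g t = ∫⁻ t, K (x, t) ∂ν := by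
    intro x hx
    have hKx : (fun t ↦ K (x, t)) = (Iic x).indicator fun t ↦ k x * g t := by
      ext t; by_cases h : t ≤ x <;> simp [K, h]
    have hset : Iic x ∩ Ioo a b = Ioc a x := by
      ext t; simp only [mem_inter_iff, mem_Iic, mem_Ioo, mem_Ioc]; grind
    rw [hKx, lintegral_indicator measurableSet_Iic, Measure.restrict_restrict measurableSet_Iic,
      hset, lintegral_const_mul'' _
        (hg.mono_measure (Measure.restrict_mono (Ioc_subset_Ioo_right hx.2) le_rfl))]
  have ht : ∀ t ∈ Ioo a b, g t * ∫⁻ x in Ico t b, k x = ∫⁻ x, K (x, t) ∂ν := by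
    intro t ht
    have hKt : (fun x ↦ K (x, t)) = (Ici t).indicator fun x ↦ g t * k x := by
      ext x; by_cases h : t ≤ x <;> simp [K, h, mul_comm]
    have hset : Ici t ∩ Ioo a b = Ico t b := by
      ext x; simp only [mem_inter_iff, mem_Ici, mem_Ioo, mem_Ico]; grind
    rw [hKt, lintegral_indicator measurableSet_Ici, Measure.restrict_restrict measurableSet_Ici,
      hset, lintegral_const_mul'' _
        (hk.mono_measure (Measure.restrict_mono (Ico_subset_Ioo_left ht.1) le_rfl))]
  calc ∫⁻ x in Ioo a b, k x * ∫⁻ t in Ioc a x, g t = ∫⁻ x, ∫⁻ t, K (x, t) ∂ν ∂ν :=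
        setLIntegral_congr_fun measurableSet_Ioo hx
    _ = ∫⁻ t, ∫⁻ x, K (x, t) ∂ν ∂ν := lintegral_lintegral_swap hK
    _ = _ := (setLIntegral_congr_fun measurableSet_Ioo ht).symm

theorem lintegral_rpow_mul_sq_setLIntegral_Ioc_zero_le_of_lt {φ : ℝ → ℝ≥0∞} {α s L : ℝ}
    (hαs : α < s) (hs : s < 1) (hφ : AEMeasurable φ (volume.restrict (Ioo 0 L))) :
    ∫⁻ x in Ioo 0 L, ENNReal.ofReal (x ^ (α - 2)) * (∫⁻ t in Ioc 0 x, φ t) ^ 2 ≤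
      ENNReal.ofReal ((s - α)⁻¹ * (1 - s)⁻¹) *
        ∫⁻ t in Ioo 0 L, ENNReal.ofReal (t ^ α) * φ t ^ 2 := by
  set g : ℝ → ℝ≥0∞ := fun t ↦ ENNReal.ofReal (t ^ s) * φ t ^ 2
  set k : ℝ → ℝ≥0∞ := fun x ↦ ENNReal.ofReal (x ^ (α - 1 - s))
  have hinv (r : ℝ) (hr : 0 < r) : 0 ≤ r⁻¹ := inv_nonneg.2 hr.le
  have hpt : ∀ x ∈ Ioo 0 L, ENNReal.ofReal (x ^ (α - 2)) * (∫⁻ t in Ioc 0 x, φ t) ^ 2 ≤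
      ENNReal.ofReal (1 - s)⁻¹ * (k x * ∫⁻ t in Ioc 0 x, g t) := by
    intro x hx
    grw [sq_setLIntegral_Ioc_zero_le hs hx.1.le
      (hφ.mono_measure (Measure.restrict_mono (Ioc_subset_Ioo_right hx.2) le_rfl))]
    rw [← mul_assoc, ← mul_assoc, ← ENNReal.ofReal_mul (Real.rpow_nonneg hx.1.le _),
      ← ENNReal.ofReal_mul (hinv _ (by linarith)), mul_comm (1 - s)⁻¹, mul_div_assoc',
      ← Real.rpow_add hx.1, div_eq_mul_inv, show α - 2 + (1 - s) = α - 1 - s by ring]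
  have htail : ∀ t ∈ Ioo 0 L, g t * ∫⁻ x in Ico t L, k x ≤
      ENNReal.ofReal (s - α)⁻¹ * (ENNReal.ofReal (t ^ α) * φ t ^ 2) := by
    intro t ht
    calc g t * ∫⁻ x in Ico t L, k x
        = ENNReal.ofReal (t ^ s) * (∫⁻ x in Ico t L, k x) * φ t ^ 2 := by ring
      _ ≤ ENNReal.ofReal (t ^ α / (s - α)) * φ t ^ 2 := by
        grw [ofReal_rpow_mul_setLIntegral_Ico_le hαs ht.1]
      _ = _ := by rw [div_eq_mul_inv, ENNReal.ofReal_mul' (hinv _ (by linarith))]; ring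
  calc _ ≤ ∫⁻ x in Ioo 0 L, ENNReal.ofReal (1 - s)⁻¹ * (k x * ∫⁻ t in Ioc 0 x, g t) :=
        setLIntegral_mono' measurableSet_Ioo hpt
    _ = ENNReal.ofReal (1 - s)⁻¹ * ∫⁻ t in Ioo 0 L, g t * ∫⁻ x in Ico t L, k x := by
        rw [lintegral_const_mul' _ _ ENNReal.ofReal_ne_top,
          lintegral_mul_setLIntegral_Ioc_comm (by fun_prop) (by fun_prop)]
    _ ≤ ENNReal.ofReal (1 - s)⁻¹ *
          ∫⁻ t in Ioo 0 L, ENNReal.ofReal (s - α)⁻¹ * (ENNReal.ofReal (t ^ α) * φ t ^ 2) := by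
        grw [setLIntegral_mono' measurableSet_Ioo htail]
    _ = _ := by
        rw [lintegral_const_mul' _ _ ENNReal.ofReal_ne_top,
          ENNReal.ofReal_mul (hinv _ (by linarith))]
        ring

theorem lintegral_rpow_mul_sq_setLIntegral_Ioc_zero_le {φ : ℝ → ℝ≥0∞} {α L : ℝ} (hα : α < 1)
    (hφ : AEMeasurable φ (volume.restrict (Ioo 0 L))) :
    ∫⁻ x in Ioo 0 L, ENNReal.ofReal (x ^ (α - 2)) * (∫⁻ t in Ioc 0 x, φ t) ^ 2 ≤
      ENNReal.ofReal (4 / (α - 1) ^ 2) * ∫⁻ t in Ioo 0 L, ENNReal.ofReal (t ^ α) * φ t ^ 2 := by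
  convert lintegral_rpow_mul_sq_setLIntegral_Ioc_zero_le_of_lt (α := α) (s := (1 + α) / 2)
    (by linarith) (by linarith) hφ using 3
  rw [show (1 + α) / 2 - α = (1 - α) / 2 by ring, show 1 - (1 + α) / 2 = (1 - α) / 2 by ring,
    ← mul_inv, ← sq, div_pow, inv_div, show (α - 1) ^ 2 = (1 - α) ^ 2 by ring]
  norm_num

theorem enorm_le_setLIntegral_Ioc_of_tendsto {z z' : ℝ → ℝ} {c x : ℝ} (hcx : c < x)
    (hFTC : ∀ a ∈ Ioo c x, z x - z a = ∫ t in a..x, z' t)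
    (hz : Tendsto z (𝓝[>] c) (𝓝 0)) : ‖z x‖ₑ ≤ ∫⁻ t in Ioc c x, ‖z' t‖ₑ := by
  have hlim : Tendsto (fun a ↦ ‖z a‖ₑ + ∫⁻ t in Ioc c x, ‖z' t‖ₑ) (𝓝[>] c)
      (𝓝 (∫⁻ t in Ioc c x, ‖z' t‖ₑ)) := by
    simpa using hz.enorm.add tendsto_const_nhds
  refine ge_of_tendsto hlim ?_
  filter_upwards [Ioo_mem_nhdsGT hcx] with a ha
  calc ‖z x‖ₑ ≤ ‖z a‖ₑ + ‖z x - z a‖ₑ := by simpa using enorm_add_le (z a) (z x - z a)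
    _ ≤ ‖z a‖ₑ + ∫⁻ t in Ioc a x, ‖z' t‖ₑ := by
      rw [hFTC a ha, intervalIntegral.integral_of_le ha.2.le]
      gcongr
      exact enorm_integral_le_lintegral_enorm _
    _ ≤ ‖z a‖ₑ + ∫⁻ t in Ioc c x, ‖z' t‖ₑ := by
      gcongr
      exact ha.1.le

theorem aemeasurable_enorm_of_rpow_mul_sq {f : ℝ → ℝ} {α : ℝ} {μ : Measure ℝ}
    (hμ : ∀ᵐ x ∂μ, 0 < x) (hf : AEStronglyMeasurable (fun x ↦ x ^ α * f x ^ 2) μ) :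
    AEMeasurable (fun x ↦ ‖f x‖ₑ) μ := by
  refine (((by fun_prop : Measurable fun x : ℝ ↦ ENNReal.ofReal (x ^ (-α))).aemeasurable.mul
    hf.enorm).pow_const (2⁻¹ : ℝ)).congr ?_
  filter_upwards [hμ] with x hx
  rw [Pi.mul_apply, enorm_mul, enorm_pow, Real.enorm_eq_ofReal (Real.rpow_nonneg hx.le _),
    ← mul_assoc, ← ENNReal.ofReal_mul (Real.rpow_nonneg hx.le _), ← Real.rpow_add hx,
    neg_add_cancel, Real.rpow_zero, ENNReal.ofReal_one, one_mul]
  simpa using ENNReal.pow_rpow_inv_natCast two_ne_zero ‖f x‖ₑ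

theorem lintegral_ofReal_rpow_mul_enorm_sq {f : ℝ → ℝ} {α : ℝ} {μ : Measure ℝ}
    (hμ : ∀ᵐ x ∂μ, 0 < x) (hf : Integrable (fun x ↦ x ^ α * f x ^ 2) μ) :
    ∫⁻ x, ENNReal.ofReal (x ^ α) * ‖f x‖ₑ ^ 2 ∂μ = ENNReal.ofReal (∫ x, x ^ α * f x ^ 2 ∂μ) := by
  rw [ofReal_integral_eq_lintegral_ofReal hf
    (hμ.mono fun x hx ↦ mul_nonneg (Real.rpow_nonneg hx.le _) (sq_nonneg _))]
  refine lintegral_congr_ae (hμ.mono fun x hx ↦ ?_)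
  dsimp only
  rw [ENNReal.ofReal_mul (Real.rpow_nonneg hx.le _), Real.enorm_eq_ofReal_abs,
    ← ENNReal.ofReal_pow (abs_nonneg _), sq_abs]

theorem stmt0_general (αs L : ℝ) (hα1 : αs < 1)
    (z z' : ℝ → ℝ)
    (hAC : ∀ a b : ℝ, 0 < a → a ≤ b → b < L →
      IntervalIntegrable z' volume a b ∧ z b - z a = ∫ μ in a..b, z' μ)
    (h0 : Tendsto z (nhdsWithin 0 (Ioi 0)) (nhds 0))
    (hint : IntegrableOn (fun x => x ^ αs * (z' x) ^ 2) (Ioo 0 L)) :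
    ∫ x in Ioo 0 L, x ^ (αs - 2) * (z x) ^ 2
      ≤ (4 / (αs - 1) ^ 2) * ∫ x in Ioo 0 L, x ^ αs * (z' x) ^ 2 := by
  have hpos : ∀ᵐ x ∂volume.restrict (Ioo 0 L), 0 < x :=
    (ae_restrict_mem measurableSet_Ioo).mono fun x hx ↦ hx.1
  have hpt : ∀ x ∈ Ioo 0 L, ‖x ^ (αs - 2) * z x ^ 2‖ₑ ≤
      ENNReal.ofReal (x ^ (αs - 2)) * (∫⁻ t in Ioc 0 x, ‖z' t‖ₑ) ^ 2 := by
    intro x hx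
    rw [enorm_mul, enorm_pow, Real.enorm_eq_ofReal (Real.rpow_nonneg hx.1.le _)]
    gcongr
    exact enorm_le_setLIntegral_Ioc_of_tendsto hx.1
      (fun a ha ↦ (hAC a x ha.1 ha.2.le hx.2).2) h0
  have hR : 0 ≤ ∫ t in Ioo 0 L, t ^ αs * z' t ^ 2 :=
    setIntegral_nonneg measurableSet_Ioo fun t ht ↦
      mul_nonneg (Real.rpow_nonneg ht.1.le _) (sq_nonneg _)
  refine (ENNReal.ofReal_le_ofReal_iff (by positivity)).1 ?_
  calc ENNReal.ofReal (∫ x in Ioo 0 L, x ^ (αs - 2) * z x ^ 2)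
      ≤ ∫⁻ x in Ioo 0 L, ‖x ^ (αs - 2) * z x ^ 2‖ₑ :=
        (Real.ofReal_le_enorm _).trans (enorm_integral_le_lintegral_enorm _)
    _ ≤ ∫⁻ x in Ioo 0 L, ENNReal.ofReal (x ^ (αs - 2)) * (∫⁻ t in Ioc 0 x, ‖z' t‖ₑ) ^ 2 :=
        setLIntegral_mono' measurableSet_Ioo hpt
    _ ≤ ENNReal.ofReal (4 / (αs - 1) ^ 2) *
          ∫⁻ t in Ioo 0 L, ENNReal.ofReal (t ^ αs) * ‖z' t‖ₑ ^ 2 :=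
        lintegral_rpow_mul_sq_setLIntegral_Ioc_zero_le hα1
          (aemeasurable_enorm_of_rpow_mul_sq hpos hint.1)
    _ = _ := by
      rw [lintegral_ofReal_rpow_mul_enorm_sq hpos hint, ← ENNReal.ofReal_mul (by positivity)]

/-- Hardy-type inequality for `0 ≤ α* < 1` with vanishing at the left endpoint. -/
theorem stmt0 (αs L : ℝ) (hα0 : 0 ≤ αs) (hα1 : αs < 1) (hL : 0 < L)
    (z z' : ℝ → ℝ)
    (hAC : ∀ a b : ℝ, 0 < a → a ≤ b → b < L →
      IntervalIntegrable z' volume a b ∧ z b - z a = ∫ μ in a..b, z' μ)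
    (h0 : Tendsto z (nhdsWithin 0 (Ioi 0)) (nhds 0))
    (hint : IntegrableOn (fun x => x ^ αs * (z' x) ^ 2) (Ioo 0 L)) :
    ∫ x in Ioo 0 L, x ^ (αs - 2) * (z x) ^ 2
      ≤ (4 / (αs - 1) ^ 2) * ∫ x in Ioo 0 L, x ^ αs * (z' x) ^ 2 :=
  stmt0_general αs L hα1 z z' hAC h0 hint
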